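/- Let w be a nonempty word over an alphabet X. Then the identity w ≈ s(w)·σ(w)·ε(w)·e(w) holds in every band; that is, for every semigroup S satisfying x·x = x and every semigroup homomorphism φ from the free semigroup on X to S, φ(w) = φ(s(w)·σ(w)·ε(w)·e(w)) (where the factors s(w) or e(w) are omitted if empty). -/

import Mathlib

/-! ### Words and word functions -/

/-- The word `w^{(i j)}`: replace every occurrence of the letter `i` by `j`. -/
def subst {X : Type*} [DecidableEq X] (w : List X) (i j : X) : List X :=
  w.map fun t => if t = i then j else t

/-- The prefix `s(w)`: the longest prefix of `w` containing all but one of the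
letters of `c(w)` (the empty word if `w` is empty). -/
def wordS {X : Type*} [DecidableEq X] (w : List X) : List X :=
  w.take (w.toFinset.sup fun x => w.idxOf x)

/-- The letter `σ(w)` (the last letter of `w` to occur from the left), as a word of
length at most one; `s(w) ++ σ(w)` is the shortest prefix of `w` with full content. -/
def wordSigma {X : Type*} [DecidableEq X] (w : List X) : List X :=
  (w.drop (w.toFinset.sup fun x => w.idxOf x)).take 1

/-- The suffix `e(w)`, dual to `s(w)`. -/
def wordE {X : Type*} [DecidableEq X] (w : List X) : List X :=
  (wordS w.reverse).reverse

/-- The letter `ε(w)` (as a word of length at most one), dual to `σ(w)`. -/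
def wordEps {X : Type*} [DecidableEq X] (w : List X) : List X :=
  (wordSigma w.reverse).reverse

/-- The initial part `i₂(w)`: retain only the first occurrence from the left of
each letter of `w`. -/
def initPart {X : Type*} [DecidableEq X] (w : List X) : List X :=
  w.reverse.dedup.reverse

/-- The dual `F̄` of a word function `F`: `F̄(w) = reverse (F (reverse w))`. -/
def dualW {X : Type*} (F : List X → List X) (w : List X) : List X :=
  (F w.reverse).reverse

theorem wordS_length_lt {X : Type*} [DecidableEq X] {w : List X} (hw : w ≠ []) :
    (wordS w).length < w.length := by
  have hpos : 0 < w.length := List.length_pos_iff.mpr hw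
  have hk : (w.toFinset.sup fun x => w.idxOf x) < w.length := by
    rw [Finset.sup_lt_iff hpos]
    intro x hx
    exact List.idxOf_lt_length_of_mem (List.mem_toFinset.mp hx)
  simp only [wordS, List.length_take]
  omega

/-- The common recursion defining the word functions `h_m` and `i_m` of Gerhard
and Petrich: `t_m(w) = t_m(s(w)) · σ(w) · t̄_{m-1}(w)` for `m ≥ 3`, where the base
function (`h₂` = first letter, `i₂` = initial part) is a parameter, and all
functions send the empty word to the empty word. -/
def tW {X : Type*} [DecidableEq X] (base : List X → List X) : ℕ → List X → List X
  | m, w =>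
    if hw : w = [] then []
    else if hm : m ≤ 2 then base w
    else tW base m (wordS w) ++ wordSigma w ++ (tW base (m - 1) w.reverse).reverse
termination_by m w => m + w.length
decreasing_by
  · have := wordS_length_lt hw; omega
  · first | (simp only [List.length_reverse]; omega) | (simp; omega) | simp | (simp_all; omega)

/-- The word function `h_m` (`m ≥ 2`): `h₂(w)` is the first letter of `w`, and
`h_m(w) = h_m(s(w)) · σ(w) · h̄_{m-1}(w)` for `m ≥ 3`. -/
def hW {X : Type*} [DecidableEq X] : ℕ → List X → List X :=
  tW fun w => w.take 1

/-- The word function `i_m` (`m ≥ 2`): `i₂(w)` is the initial part of `w`, and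
`i_m(w) = i_m(s(w)) · σ(w) · ī_{m-1}(w)` for `m ≥ 3`. -/
def iW {X : Type*} [DecidableEq X] : ℕ → List X → List X :=
  tW initPart

/-! ### Operations induced by words -/

/-- Evaluation of a word `w` over the alphabet `X` in a semigroup `S` under the
assignment `a : X → S`, computed in the monoid `WithOne S` (so that the empty word
evaluates to `1` and a nonempty word to the coercion of its value in `S`). -/
def evalW {X S : Type*} [Semigroup S] (a : X → S) (w : List X) : WithOne S :=
  (w.map fun t => (a t : WithOne S)).prod

/-- The identification minor `f_{i j}` of an `n`-ary operation: the `i`-th argument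
is replaced by the `j`-th. -/
def minor {α β : Type*} {n : ℕ} (f : (Fin n → α) → β) (i j : Fin n) :
    (Fin n → α) → β :=
  fun a => f (Function.update a i (a j))

/-- `f` depends on its `i`-th variable. -/
def DependsOnVar {α β : Type*} {n : ℕ} (f : (Fin n → α) → β) (i : Fin n) : Prop :=
  ∃ a b : Fin n → α, (∀ k : Fin n, k ≠ i → a k = b k) ∧ f a ≠ f b

/-- `f : Sⁿ → S` is induced by a (nonempty) word over `X_n = {x_1, …, x_n}`. -/
def InducedByWord {S : Type*} [Semigroup S] {n : ℕ} (f : (Fin n → S) → S) : Prop :=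
  ∃ w : List (Fin n), w ≠ [] ∧ ∀ a : Fin n → S, (f a : WithOne S) = evalW a w


section BandAux

variable {M : Type*} [Monoid M]

/-- In a monoid in which every element is idempotent, a product absorbs any
single factor occurring in it: `l.prod * x * l.prod = l.prod` for `x ∈ l`. -/
private lemma band_sl (idem : ∀ x : M, x * x = x) :
    ∀ (l : List M) (x : M), x ∈ l → l.prod * x * l.prod = l.prod := by
  intro l
  induction l with
  | nil => intro x hx; simp at hx
  | cons t l ih =>
    intro x hx
    rw [List.prod_cons]
    rcases List.mem_cons.mp hx with rfl | hx
    · calc (x * l.prod) * x * (x * l.prod)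
          = (x * l.prod) * ((x * x) * l.prod) := by simp only [mul_assoc]
        _ = (x * l.prod) * (x * l.prod) := by rw [idem x]
        _ = x * l.prod := idem _
    · have ihn : l.prod * (x * l.prod) = l.prod := by
        rw [← mul_assoc]; exact ih x hx
      calc (t * l.prod) * x * (t * l.prod)
          = (t * (l.prod * x)) * (t * (l.prod * (x * l.prod))) := by
            rw [ihn]; simp only [mul_assoc]
        _ = ((t * (l.prod * x)) * (t * (l.prod * x))) * l.prod := by
            simp only [mul_assoc]
        _ = (t * (l.prod * x)) * l.prod := by rw [idem (t * (l.prod * x))]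
        _ = t * (l.prod * (x * l.prod)) := by simp only [mul_assoc]
        _ = t * l.prod := by rw [ihn]

/-- In a monoid in which every element is idempotent, `u.prod * v.prod * u.prod
= u.prod` whenever every factor of `v` occurs in `u`. -/
private lemma band_absorb (idem : ∀ x : M, x * x = x) :
    ∀ (v u : List M), (∀ x ∈ v, x ∈ u) → u.prod * v.prod * u.prod = u.prod := by
  intro v
  induction v using List.reverseRecOn with
  | nil => intro u _; rw [List.prod_nil, mul_one]; exact idem _
  | append_singleton v x ih =>
    intro u hvu
    have hx : x ∈ u := hvu x (by simp)
    have ihu : u.prod * v.prod * u.prod = u.prod :=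
      ih u (fun y hy => hvu y (by simp [hy]))
    have hsl : (u.prod * v.prod) * x * (u.prod * v.prod) = u.prod * v.prod := by
      have h := band_sl idem (u ++ v) x (by simp [hx])
      simpa [List.prod_append] using h
    rw [List.prod_append, List.prod_singleton]
    calc u.prod * (v.prod * x) * u.prod
        = (u.prod * v.prod) * x * ((u.prod * v.prod) * u.prod) := by
          rw [ihu]; simp only [mul_assoc]
      _ = ((u.prod * v.prod) * x * (u.prod * v.prod)) * u.prod := by
          simp only [mul_assoc]
      _ = (u.prod * v.prod) * u.prod := by rw [hsl]
      _ = u.prod := ihu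

/-- Every element of a word belongs to its shortest full-content prefix. -/
private lemma mem_take_sup_succ {X : Type*} [DecidableEq X] (u : List X) (x : X)
    (hx : x ∈ u) : x ∈ u.take ((u.toFinset.sup fun y => u.idxOf y) + 1) := by
  set k := u.toFinset.sup fun y => u.idxOf y with hk
  have h1 : u.idxOf x ≤ k := Finset.le_sup (f := fun y => u.idxOf y) (List.mem_toFinset.mpr hx)
  have h2 : u.idxOf x < u.length := List.idxOf_lt_length_iff.mpr hx
  have hlen : u.idxOf x < (u.take (k + 1)).length := by
    simp only [List.length_take]
    omega
  have hval : (u.take (k + 1))[u.idxOf x]'hlen = x := by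
    rw [List.getElem_take]
    exact List.getElem_idxOf h2
  exact hval ▸ List.getElem_mem hlen

/-- `s(u) ++ σ(u)` is the prefix `u.take (k+1)`. -/
private lemma wordS_append_wordSigma {X : Type*} [DecidableEq X] (u : List X) :
    wordS u ++ wordSigma u = u.take ((u.toFinset.sup fun y => u.idxOf y) + 1) := by
  set k := u.toFinset.sup fun y => u.idxOf y with hk
  rw [wordS, wordSigma, ← hk, List.take_drop]
  conv_lhs =>
    rw [show u.take k = (u.take (k + 1)).take k from by
      rw [List.take_take, Nat.min_eq_left (by omega)]]
  rw [List.take_append_drop]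

end BandAux

/-- For every nonempty word `w`, the identity
`w ≈ s(w)·σ(w)·ε(w)·e(w)` holds in every band. -/
theorem word_eq_s_sigma_eps_e_in_bands {X : Type*} [DecidableEq X]
    (w : List X) (hw : w ≠ [])
    {S : Type*} [Semigroup S] (hband : ∀ x : S, x * x = x) (a : X → S) :
    evalW a w = evalW a (wordS w ++ wordSigma w ++ wordEps w ++ wordE w) := by
  classical
  -- Every element of `WithOne S` is idempotent.
  have idem : ∀ x : WithOne S, x * x = x := by
    intro x
    induction x using WithOne.recOneCoe with
    | one => exact mul_one 1
    | coe s => rw [← WithOne.coe_mul, hband]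
  have evapp : ∀ u v : List X, evalW a (u ++ v) = evalW a u * evalW a v := by
    intro u v
    simp [evalW, List.prod_append]
  set k := w.toFinset.sup fun y => w.idxOf y with hk
  set k' := w.reverse.toFinset.sup fun y => w.reverse.idxOf y with hk'
  set s1 := w.take (k + 1) with hs1
  set s2 := (w.reverse.take (k' + 1)).reverse with hs2
  have hsplit1 : wordS w ++ wordSigma w = s1 := by
    rw [wordS_append_wordSigma, ← hk]
  have hsplit2 : wordEps w ++ wordE w = s2 := by
    rw [wordEps, wordE, ← List.reverse_append, wordS_append_wordSigma, ← hk']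
  have hmem1 : ∀ x ∈ w, x ∈ s1 := fun x hx => mem_take_sup_succ w x hx
  have hmem2 : ∀ x ∈ w, x ∈ s2 := fun x hx =>
    List.mem_reverse.mpr (mem_take_sup_succ w.reverse x (List.mem_reverse.mpr hx))
  have hsub1 : ∀ x ∈ s1, x ∈ w := fun x hx => List.take_subset _ _ hx
  have hsub2 : ∀ x ∈ s2, x ∈ w := fun x hx => by
    have h := List.take_subset _ _ (List.mem_reverse.mp hx)
    exact List.mem_reverse.mp h
  set P := evalW a s1 with hP
  set E := evalW a s2 with hE
  set W := evalW a w with hW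
  -- `s1` is a prefix of `w`, so `P * W = W`.
  have hw1 : W = P * evalW a (w.drop (k + 1)) := by
    rw [hW, hP, hs1, ← evapp, List.take_append_drop]
  have hPW : P * W = W := by rw [hw1, ← mul_assoc, idem]
  -- `s2` is a suffix of `w`, so `W * E = W`.
  have hw2 : W = evalW a ((w.reverse.drop (k' + 1)).reverse) * E := by
    rw [hW, hE, hs2, ← evapp, ← List.reverse_append, List.take_append_drop,
      List.reverse_reverse]
  have hWE : W * E = W := by rw [hw2, mul_assoc, idem]
  -- Absorption identities from the band lemma.
  have hL1 : P * (W * E) * P = P := by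
    have h := band_absorb idem ((w ++ s2).map fun t => (a t : WithOne S))
      (s1.map fun t => (a t : WithOne S)) ?_
    · have e1 : ((w ++ s2).map fun t => (a t : WithOne S)).prod = W * E := by
        rw [hW, hE]; simp [evalW, List.prod_append]
      have e2 : (s1.map fun t => (a t : WithOne S)).prod = P := by rw [hP]; rfl
      rwa [e1, e2] at h
    · intro x hxm
      obtain ⟨y, hy, rfl⟩ := List.mem_map.mp hxm
      refine List.mem_map_of_mem (hmem1 y ?_)
      rcases List.mem_append.mp hy with h | h
      · exact h
      · exact hsub2 y h
  have hL2 : E * P * E = E := by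
    have h := band_absorb idem (s1.map fun t => (a t : WithOne S))
      (s2.map fun t => (a t : WithOne S)) ?_
    · have e1 : (s1.map fun t => (a t : WithOne S)).prod = P := by rw [hP]; rfl
      have e2 : (s2.map fun t => (a t : WithOne S)).prod = E := by rw [hE]; rfl
      rwa [e1, e2] at h
    · intro x hxm
      obtain ⟨y, hy, rfl⟩ := List.mem_map.mp hxm
      exact List.mem_map_of_mem (hmem2 y (hsub1 y hy))
  -- The main computation:  `P * E = W`.
  have key : P * E = W := by
    calc P * E = (P * (W * E) * P) * E := by rw [hL1]
      _ = P * W * (E * P * E) := by simp only [mul_assoc]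
      _ = P * W * E := by rw [hL2]
      _ = W * E := by rw [hPW]
      _ = W := hWE
  rw [List.append_assoc (wordS w ++ wordSigma w), hsplit1, hsplit2, evapp]
  exact key.symm
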